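/- The digraph D constructed from any 3-Dimensional Matching instance (X^α, X^β, X^γ, E) is a directed acyclic graph, and the deletion of the twelve vertices α_1, α_2, α_3, β_1, β_2, β_3, γ_1, γ_2, γ_3, a, b, c from its underlying undirected graph leaves a graph with no cycle (so the underlying undirected graph of D has feedback vertex set number at most 12). -/

import Mathlib

namespace GeoPaper

variable {V : Type*}

/-- A directed walk from `u` to `v` in the digraph with arc relation `D`,
represented by the list of its vertices. -/
def IsWalk (D : V → V → Prop) (u v : V) (p : List V) : Prop :=
  p.Chain' D ∧ p.head? = some u ∧ p.getLast? = some v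

/-- `interval D u v` is the set of vertices lying on some shortest directed
path from `u` to `v` (i.e. a directed walk of minimum length from `u` to `v`). -/
def interval (D : V → V → Prop) (u v : V) : Set V :=
  {x | ∃ p, IsWalk D u v p ∧ (∀ q, IsWalk D u v q → p.length ≤ q.length) ∧ x ∈ p}

/-- `S` is a geodetic set of the digraph `D`: every vertex lies on a shortest
directed path between two vertices of `S`. -/
def IsGeodetic (D : V → V → Prop) (S : Set V) : Prop :=
  ∀ x, ∃ u ∈ S, ∃ v ∈ S, x ∈ interval D u v

/-- `S` is a geodetic set of minimum cardinality. -/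
def IsMinGeodetic (D : V → V → Prop) (S : Set V) : Prop :=
  IsGeodetic D S ∧ ∀ T : Set V, IsGeodetic D T → S.ncard ≤ T.ncard

/-- a source: no incoming arcs. -/
def IsSource (D : V → V → Prop) (v : V) : Prop := ∀ u, ¬ D u v

/-- a sink: no outgoing arcs. -/
def IsSink (D : V → V → Prop) (v : V) : Prop := ∀ u, ¬ D v u

/-- an extremal vertex: a source or a sink. -/
def Extremal (D : V → V → Prop) (v : V) : Prop := IsSource D v ∨ IsSink D v

/-- the digraph `D` has no directed 2-cycle (an oriented graph). -/
def NoTwoCycle (D : V → V → Prop) : Prop := ∀ u v, D u v → ¬ D v u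

/-- the underlying undirected simple graph of a digraph. -/
def underlying (D : V → V → Prop) : SimpleGraph V where
  Adj u v := u ≠ v ∧ (D u v ∨ D v u)
  symm := ⟨by intro u v h; exact ⟨h.1.symm, h.2.symm⟩⟩
  loopless := ⟨by intro v h; exact h.1 rfl⟩

/-- a leaf: a vertex of degree 1 in the underlying undirected graph. -/
def IsLeaf (D : V → V → Prop) (v : V) : Prop := ((underlying D).neighborSet v).ncard = 1

/-- a ditree: a digraph whose underlying undirected graph is a tree. -/
def IsDitree (D : V → V → Prop) : Prop := (∀ v, ¬ D v v) ∧ (underlying D).IsTree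

/-- reachability by directed paths. -/
def Reach (D : V → V → Prop) : V → V → Prop := Relation.ReflTransGen D

/-- `S` is a maximal strongly connected component of `D`. -/
def IsSCC (D : V → V → Prop) (S : Set V) : Prop :=
  S.Nonempty ∧ (∀ u ∈ S, ∀ v ∈ S, Reach D u v) ∧
    ∀ T : Set V, S ⊆ T → (∀ u ∈ T, ∀ v ∈ T, Reach D u v) → T ⊆ S

/-- a source set: a maximal strongly connected component no arc enters from outside. -/
def IsSourceSet (D : V → V → Prop) (S : Set V) : Prop :=
  IsSCC D S ∧ ∀ u v, v ∈ S → D u v → u ∈ S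

/-- a sink set: a maximal strongly connected component no arc leaves. -/
def IsSinkSet (D : V → V → Prop) (S : Set V) : Prop :=
  IsSCC D S ∧ ∀ u v, u ∈ S → D u v → v ∈ S

/-- a transitive vertex. -/
def IsTransitiveVertex (D : V → V → Prop) (v : V) : Prop :=
  ∀ u1 u2, D u1 v → D v u2 → D u1 u2 ∨ u1 = u2




variable {V : Type*}

/-- degree of `v` inside the vertex subset `W` of the graph `G`. -/
noncomputable def degIn (G : SimpleGraph V) (W : Set V) (v : V) : ℕ := {u | u ∈ W ∧ G.Adj v u}.ncard

/-- one round of pruning: delete all vertices of degree exactly 1. -/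
def pruneStep (G : SimpleGraph V) (W : Set V) : Set V := {v | v ∈ W ∧ degIn G W v ≠ 1}

/-- the vertex set of the base graph of `G`, obtained by iteratively deleting
degree-1 vertices until none remain. -/
def baseSet (G : SimpleGraph V) : Set V := ⋂ k, (pruneStep G)^[k] Set.univ

/-- a core vertex: a vertex of degree at least 3 in the base graph. -/
def IsCoreVertex (G : SimpleGraph V) (v : V) : Prop :=
  v ∈ baseSet G ∧ 3 ≤ degIn G (baseSet G) v

/-- the inner vertices of a path represented as a list of its vertices. -/
def innerList (p : List V) : List V := (p.drop 1).dropLast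

/-- a core path of the base graph of `G`: a path between two core vertices all
of whose internal vertices have degree 2 in the base graph (the two endpoints
may coincide, in which case the core path is a core cycle). -/
def IsCorePath (G : SimpleGraph V) (p : List V) : Prop :=
  ∃ a q b, p = a :: (q ++ [b]) ∧
    p.Chain' G.Adj ∧
    (∀ v ∈ p, v ∈ baseSet G) ∧
    IsCoreVertex G a ∧ IsCoreVertex G b ∧
    q.Nodup ∧ (∀ v ∈ q, v ≠ a ∧ v ≠ b ∧ degIn G (baseSet G) v = 2) ∧
    (a = b → 4 ≤ p.length) ∧ (a ≠ b → p.Nodup)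

/-- the feedback edge set number: the minimum number of edges whose deletion
yields a forest. -/
noncomputable def fen (G : SimpleGraph V) : ℕ :=
  sInf {k | ∃ F : Set (Sym2 V), F ⊆ G.edgeSet ∧ F.ncard = k ∧ (G.deleteEdges F).IsAcyclic}

/-- the feedback vertex set number: the minimum number of vertices whose
deletion yields a forest. -/
noncomputable def fvn (G : SimpleGraph V) : ℕ :=
  sInf {k | ∃ W : Set V, W.ncard = k ∧ (G.induce Wᶜ).IsAcyclic}




/-! ### The reduction from 3-Dimensional Matching

A 3DM instance consists of three disjoint sets `Xᵅ, Xᵝ, Xᵞ`, each identified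
with `Fin n` (the element `x_l^δ` corresponding to `l : Fin n`), and an
injective family `E : Fin m → Fin n × Fin n × Fin n` of `m` triples. -/

/-- the value `λ = n + 1` used in the construction. -/
def lamN (n : ℕ) : ℕ := n + 1

/-- an element `l : Fin n` stands for the element numbered `l + 1` in `1, …, n`. -/
def idx1 {n : ℕ} (l : Fin n) : ℕ := (l : ℕ) + 1

/-- the `δ`-component of a triple, for `δ : Fin 3` (`0 = α`, `1 = β`, `2 = γ`). -/
def tcomp {n : ℕ} (t : Fin n × Fin n × Fin n) (δ : Fin 3) : Fin n :=
  if δ = 0 then t.1 else if δ = 1 then t.2.1 else t.2.2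

/-- a set `S` of `n` triples of `E` covering every element of `U`. -/
def Is3DMSolution (n m : ℕ) (E : Fin m → Fin n × Fin n × Fin n)
    (S : Finset (Fin m)) : Prop :=
  S.card = n ∧ ∀ (δ : Fin 3) (l : Fin n), ∃ e ∈ S, tcomp (E e) δ = l

/-- length of the path from a copy `u_e` of the triple `t = E e` to the vertex `δ_{s+1}`:
`λ² - iλ`, `λ²`, `λ² + iλ` for `s = 0, 1, 2` respectively, where `i = idx1 (tcomp t δ)`. -/
def lenA (n : ℕ) (t : Fin n × Fin n × Fin n) (δ s : Fin 3) : ℕ :=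
  if s = 0 then lamN n ^ 2 - idx1 (tcomp t δ) * lamN n
  else if s = 1 then lamN n ^ 2
  else lamN n ^ 2 + idx1 (tcomp t δ) * lamN n

/-- length of the path from the vertex `δ_{s+1}` to `w_l^δ`:
`λ² + lλ`, `λ²`, `λ² - lλ` for `s = 0, 1, 2` respectively. -/
def lenB (n : ℕ) (s : Fin 3) (l : Fin n) : ℕ :=
  if s = 0 then lamN n ^ 2 + idx1 l * lamN n
  else if s = 1 then lamN n ^ 2
  else lamN n ^ 2 - idx1 l * lamN n

/-- The vertices of the digraph `D` constructed from the 3DM instance. -/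
inductive RV (n m : ℕ) (E : Fin m → Fin n × Fin n × Fin n) : Type
  /-- `u_i^e`: the copy of the triple `e` in the set `M_i` -/
  | edgeV (i : Fin n) (e : Fin m)
  /-- the vertex `d_i` -/
  | dV (i : Fin n)
  | a
  | b
  | c
  /-- the element vertex `v_l^δ` -/
  | vV (δ : Fin 3) (l : Fin n)
  /-- the element vertex `w_l^δ` -/
  | wV (δ : Fin 3) (l : Fin n)
  /-- the element vertex `t_l^δ` -/
  | tV (δ : Fin 3) (l : Fin n)
  /-- the vertex `δ_{s+1}` for `δ ∈ {α, β, γ}` and `s ∈ Fin 3` -/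
  | deltaV (δ : Fin 3) (s : Fin 3)
  /-- the pendant out-neighbor of `δ_{s+1}` -/
  | deltaPend (δ : Fin 3) (s : Fin 3)
  /-- the pendant out-neighbor of the vertex immediately preceding `δ_{s+1}`
  on the path from `u_i^e` to `δ_{s+1}` -/
  | pendA (i : Fin n) (e : Fin m) (δ : Fin 3) (s : Fin 3)
  /-- the internal vertices of the path from `u_i^e` to `δ_{s+1}` -/
  | innA (i : Fin n) (e : Fin m) (δ : Fin 3) (s : Fin 3)
      (j : Fin (lenA n (E e) δ s - 1))
  /-- the internal vertices of the path from `δ_{s+1}` to `w_l^δ` -/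
  | innB (δ : Fin 3) (s : Fin 3) (l : Fin n) (j : Fin (lenB n s l - 1))
  /-- the internal vertices of the path from `δ_2` to `t_l^δ` -/
  | innT (δ : Fin 3) (l : Fin n) (j : Fin (lamN n ^ 2 - 1))

variable {n m : ℕ} {E : Fin m → Fin n × Fin n × Fin n}

/-- the `j`-th vertex (for `0 ≤ j ≤ lenA`) on the path from `u_i^e` to `δ_{s+1}`. -/
def pA (i : Fin n) (e : Fin m) (δ s : Fin 3) (j : ℕ) : RV n m E :=
  if h0 : j = 0 then .edgeV i e
  else if h : j < lenA n (E e) δ s then .innA i e δ s ⟨j - 1, by omega⟩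
  else .deltaV δ s

/-- the `j`-th vertex (for `0 ≤ j ≤ lenB`) on the path from `δ_{s+1}` to `w_l^δ`. -/
def pB (δ s : Fin 3) (l : Fin n) (j : ℕ) : RV n m E :=
  if h0 : j = 0 then .deltaV δ s
  else if h : j < lenB n s l then .innB δ s l ⟨j - 1, by omega⟩
  else .wV δ l

/-- the `j`-th vertex (for `0 ≤ j ≤ λ²`) on the path from `δ_2` to `t_l^δ`. -/
def pT (δ : Fin 3) (l : Fin n) (j : ℕ) : RV n m E :=
  if h0 : j = 0 then .deltaV δ 1
  else if h : j < lamN n ^ 2 then .innT δ l ⟨j - 1, by omega⟩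
  else .tV δ l

/-- The arcs of the digraph `D` constructed from the 3DM instance. -/
inductive RAdj (n m : ℕ) (E : Fin m → Fin n × Fin n × Fin n) :
    RV n m E → RV n m E → Prop
  /-- arcs from every vertex of `M_i` to `d_i` -/
  | edge_d (i : Fin n) (e : Fin m) : RAdj n m E (.edgeV i e) (.dV i)
  /-- arcs from `a` to every vertex of every `M_i` -/
  | a_edge (i : Fin n) (e : Fin m) : RAdj n m E .a (.edgeV i e)
  /-- arcs from every vertex of every `M_i` to `b` -/
  | edge_b (i : Fin n) (e : Fin m) : RAdj n m E (.edgeV i e) .b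
  /-- arcs from each `d_i` to `c` -/
  | d_c (i : Fin n) : RAdj n m E (.dV i) .c
  /-- the arc from `a` to `c` -/
  | a_c : RAdj n m E .a .c
  /-- the arc from `w_l^δ` to `v_l^δ` -/
  | w_v (δ : Fin 3) (l : Fin n) : RAdj n m E (.wV δ l) (.vV δ l)
  /-- the arc from `t_l^δ` to `v_l^δ` -/
  | t_v (δ : Fin 3) (l : Fin n) : RAdj n m E (.tV δ l) (.vV δ l)
  /-- the arc from `δ_{s+1}` to its pendant out-neighbor -/
  | delta_pend (δ : Fin 3) (s : Fin 3) : RAdj n m E (.deltaV δ s) (.deltaPend δ s)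
  /-- the arcs from `a` to every vertex `v_l^δ` -/
  | a_v (δ : Fin 3) (l : Fin n) : RAdj n m E .a (.vV δ l)
  /-- the arcs of the directed path of length `lenA n (E e) δ s` from `u_i^e` to `δ_{s+1}` -/
  | pathA (i : Fin n) (e : Fin m) (δ s : Fin 3) (j : ℕ) (h : j < lenA n (E e) δ s) :
      RAdj n m E (pA i e δ s j) (pA i e δ s (j + 1))
  /-- the arcs of the directed path of length `lenB n s l` from `δ_{s+1}` to `w_l^δ` -/
  | pathB (δ s : Fin 3) (l : Fin n) (j : ℕ) (h : j < lenB n s l) :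
      RAdj n m E (pB δ s l j) (pB δ s l (j + 1))
  /-- the arcs of the directed path of length `λ²` from `δ_2` to `t_l^δ` -/
  | pathT (δ : Fin 3) (l : Fin n) (j : ℕ) (h : j < lamN n ^ 2) :
      RAdj n m E (pT δ l j) (pT δ l (j + 1))
  /-- the arc from the vertex immediately preceding `δ_{s+1}` on the path from
  `u_i^e` to `δ_{s+1}` to its pendant out-neighbor -/
  | pendA_arc (i : Fin n) (e : Fin m) (δ s : Fin 3) :
      RAdj n m E (pA i e δ s (lenA n (E e) δ s - 1)) (.pendA i e δ s)

/-! Both claims are witnessed by ranks. `topoRank` increases along every arc, so `D` is acyclic.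
After deleting the twelve hubs, every edge joins a vertex to its `forestParent`, which has
smaller `forestRank`; this forces a forest, because on a cycle the vertex of maximal rank would
have two distinct neighbours, both equal to its parent. -/

section ParentRank

theorem isAcyclic_of_parent_rank {G : SimpleGraph V} (f : V → V) (r : V → ℕ)
    (h : ∀ ⦃x y⦄, G.Adj x y → f x = y ∧ r y < r x ∨ f y = x ∧ r x < r y) : G.IsAcyclic := by
  classical
  intro v c hc
  obtain ⟨u, hu, hmax⟩ := c.support.toFinset.exists_max_image r ⟨v, by simp⟩
  rw [List.mem_toFinset] at hu
  set d := c.rotate u hu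
  have hd : d.IsCycle := hc.rotate hu
  have parent_eq : ∀ x ∈ d.support, G.Adj u x → f u = x := fun x hx hux =>
    ((h hux).resolve_right fun ⟨_, hlt⟩ =>
      (hmax x (by simpa [d] using hx)).not_gt hlt).1
  exact hd.snd_ne_penultimate <|
    (parent_eq _ (d.getVert_mem_support 1) (d.adj_snd hd.not_nil)).symm.trans
      (parent_eq _ (d.getVert_mem_support _) (d.adj_penultimate hd.not_nil).symm)

theorem isAcyclic_induce_of_parent_rank {G : SimpleGraph V} {s : Set V} (f : V → V)
    (r : V → ℕ)
    (h : ∀ x ∈ s, ∀ y ∈ s, G.Adj x y → f x = y ∧ r y < r x ∨ f y = x ∧ r x < r y) :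
    (G.induce s).IsAcyclic := by
  classical
  refine isAcyclic_of_parent_rank (fun x => if hx : f x ∈ s then ⟨f x, hx⟩ else x)
    (fun x => r x) ?_
  rintro ⟨x, hx⟩ ⟨y, hy⟩ hxy
  rcases h x hx y hy hxy with ⟨rfl, hr⟩ | ⟨rfl, hr⟩
  · exact Or.inl ⟨by simp [hy], hr⟩
  · exact Or.inr ⟨by simp [hx], hr⟩

end ParentRank

section PathVertex

variable {α : Type*} {L j : ℕ} {x y : α} {inner : Fin (L - 1) → α}

/-- `pA`, `pB` and `pT` are definitionally instances of this path. -/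
def pathVertex (L : ℕ) (x : α) (inner : Fin (L - 1) → α) (y : α) (j : ℕ) : α :=
  if h0 : j = 0 then x else if h : j < L then inner ⟨j - 1, by omega⟩ else y

lemma pathVertex_of_lt (h0 : j ≠ 0) (h : j < L) :
    pathVertex L x inner y j = inner ⟨j - 1, by omega⟩ := by
  rw [pathVertex, dif_neg h0, dif_pos h]

lemma pathVertex_of_le (h0 : j ≠ 0) (h : L ≤ j) : pathVertex L x inner y j = y := by
  rw [pathVertex, dif_neg h0, dif_neg (not_lt.mpr h)]

lemma rank_pathVertex (r : α → ℕ) {b : ℕ} (hx : r x = b)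
    (hin : ∀ k : Fin (L - 1), r (inner k) = b + k + 1) (hj : j < L) :
    r (pathVertex L x inner y j) = b + j := by
  rcases Nat.eq_zero_or_pos j with rfl | hpos
  · exact hx
  · rw [pathVertex_of_lt hpos.ne' hj, hin]
    simp only
    omega

lemma rank_pathVertex_lt_succ (r : α → ℕ) {b : ℕ} (hx : r x = b)
    (hin : ∀ k : Fin (L - 1), r (inner k) = b + k + 1) (hy : b + L ≤ r y) (hj : j < L) :
    r (pathVertex L x inner y j) < r (pathVertex L x inner y (j + 1)) := by
  rw [rank_pathVertex r hx hin hj]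
  rcases lt_or_ge (j + 1) L with hj' | hj'
  · rw [rank_pathVertex r hx hin hj']
    omega
  · rw [pathVertex_of_le j.succ_ne_zero hj']
    omega

lemma parent_pathVertex_succ (f : α → α) (r : α → ℕ) {b : ℕ}
    (hf : ∀ k : Fin (L - 1), f (inner k) = pathVertex L x inner y k) (hx : r x = b)
    (hin : ∀ k : Fin (L - 1), r (inner k) = b + k + 1) (hj : j + 1 < L) :
    f (pathVertex L x inner y (j + 1)) = pathVertex L x inner y j ∧
      r (pathVertex L x inner y j) < r (pathVertex L x inner y (j + 1)) := by
  refine ⟨by rw [pathVertex_of_lt j.succ_ne_zero hj, hf]; rfl, ?_⟩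
  rw [rank_pathVertex r hx hin hj, rank_pathVertex r hx hin (by omega)]
  omega

lemma parent_pathVertex_pred (f : α → α) (r : α → ℕ)
    (hf : ∀ k : Fin (L - 1), f (inner k) = pathVertex L x inner y (k + 2))
    (hin : ∀ k : Fin (L - 1), r (inner k) = L - k) (hy : r y = 1) (h0 : j ≠ 0) (hj : j < L) :
    f (pathVertex L x inner y j) = pathVertex L x inner y (j + 1) ∧
      r (pathVertex L x inner y (j + 1)) < r (pathVertex L x inner y j) := by
  rw [pathVertex_of_lt h0 hj, hf, hin]
  refine ⟨by simp only; congr 1; omega, ?_⟩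
  rcases lt_or_ge (j + 1) L with hj' | hj'
  · rw [pathVertex_of_lt j.succ_ne_zero hj', hin]
    simp only
    omega
  · rw [pathVertex_of_le j.succ_ne_zero hj', hy]
    simp only
    omega

end PathVertex

section Construction

lemma pA_eq (i : Fin n) (e : Fin m) (δ s : Fin 3) (j : ℕ) :
    (pA i e δ s j : RV n m E) =
      pathVertex (lenA n (E e) δ s) (.edgeV i e) (.innA i e δ s) (.deltaV δ s) j := rfl

lemma pB_eq (δ s : Fin 3) (l : Fin n) (j : ℕ) :
    (pB δ s l j : RV n m E) = pathVertex (lenB n s l) (.deltaV δ s) (.innB δ s l) (.wV δ l) j :=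
  rfl

lemma pT_eq (δ : Fin 3) (l : Fin n) (j : ℕ) :
    (pT δ l j : RV n m E) = pathVertex (lamN n ^ 2) (.deltaV δ 1) (.innT δ l) (.tV δ l) j := rfl

lemma idx1_mul_lt_lamN_sq (l : Fin n) : idx1 l * lamN n < lamN n ^ 2 := by
  rw [sq]
  exact Nat.mul_lt_mul_of_pos_right (by simp [idx1, lamN]) (by simp [lamN])

lemma lenA_pos (t : Fin n × Fin n × Fin n) (δ s : Fin 3) : 0 < lenA n t δ s := by
  have := idx1_mul_lt_lamN_sq (tcomp t δ)
  unfold lenA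
  split_ifs <;> omega

lemma lenA_le (t : Fin n × Fin n × Fin n) (δ s : Fin 3) : lenA n t δ s ≤ 2 * lamN n ^ 2 := by
  have := idx1_mul_lt_lamN_sq (tcomp t δ)
  unfold lenA
  split_ifs <;> omega

lemma lenB_le (s : Fin 3) (l : Fin n) : lenB n s l ≤ 2 * lamN n ^ 2 := by
  have := idx1_mul_lt_lamN_sq l
  unfold lenB
  split_ifs <;> omega

/-- The paths out of `M_i` live in ranks `1, …, 2λ²`, the paths out of the `δ_s` in ranks
`2λ² + 1, …, 4λ²`, and the `v_l^δ, w_l^δ, t_l^δ` above. -/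
def topoRank : RV n m E → ℕ
  | .a => 0
  | .edgeV _ _ => 1
  | .dV _ | .b => 2
  | .c => 3
  | .innA _ _ _ _ j => j + 2
  | .pendA _ e δ s => lenA n (E e) δ s + 1
  | .deltaV _ _ => 2 * lamN n ^ 2 + 1
  | .deltaPend _ _ => 2 * lamN n ^ 2 + 2
  | .innB _ _ _ j | .innT _ _ j => 2 * lamN n ^ 2 + j + 2
  | .wV _ _ | .tV _ _ => 4 * lamN n ^ 2 + 1
  | .vV _ _ => 4 * lamN n ^ 2 + 2

lemma topoRank_lt_of_adj {u v : RV n m E} (h : RAdj n m E u v) : topoRank u < topoRank v := by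
  cases h with
  | pathA i e δ s j hj =>
    simp only [pA_eq]
    have := lenA_le (E e) δ s
    exact rank_pathVertex_lt_succ topoRank (b := 1) rfl (fun _ => by simp only [topoRank]; omega)
      (by simp only [topoRank]; omega) hj
  | pathB δ s l j hj =>
    simp only [pB_eq]
    have := lenB_le s l
    exact rank_pathVertex_lt_succ topoRank rfl (fun _ => by simp only [topoRank]; omega)
      (by simp only [topoRank]; omega) hj
  | pathT δ l j hj =>
    simp only [pT_eq]
    exact rank_pathVertex_lt_succ topoRank rfl (fun _ => by simp only [topoRank]; omega)
      (by simp only [topoRank]; omega) hj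
  | pendA_arc i e δ s =>
    have := lenA_pos (E e) δ s
    rw [pA_eq, rank_pathVertex topoRank (b := 1) rfl (fun _ => by simp only [topoRank]; omega)
      (by omega)]
    simp only [topoRank]
    omega
  | _ => simp [topoRank]

lemma topoRank_lt_of_transGen {u v : RV n m E} (h : Relation.TransGen (RAdj n m E) u v) :
    topoRank u < topoRank v := by
  have := Relation.TransGen.lift topoRank (fun _ _ => topoRank_lt_of_adj) _ _ h
  rwa [Relation.transGen_eq_self] at this

end Construction

section Forest

def IsHub (v : RV n m E) : Prop :=
  v = .a ∨ v = .b ∨ v = .c ∨ ∃ δ s : Fin 3, v = .deltaV δ s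

/-- After deleting the hubs, the components are trees rooted at the `d_i` and the `v_l^δ`
(plus the isolated pendants of the `δ_s`): each path out of `M_i` hangs below `u_i^e`, which
hangs below `d_i`, and each path into `w_l^δ` or `t_l^δ` hangs below it, which hangs below
`v_l^δ`. -/
def forestParent : RV n m E → RV n m E
  | .edgeV i _ => .dV i
  | .wV δ l | .tV δ l => .vV δ l
  | .innA i e δ s j => pA i e δ s j
  | .pendA i e δ s => pA i e δ s (lenA n (E e) δ s - 1)
  | .innB δ s l j => pB δ s l (j + 2)
  | .innT δ l j => pT δ l (j + 2)
  | v => v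

def forestRank : RV n m E → ℕ
  | .edgeV _ _ | .wV _ _ | .tV _ _ => 1
  | .innA _ _ _ _ j => j + 2
  | .pendA _ e δ s => lenA n (E e) δ s + 1
  | .innB _ s l j => lenB n s l - j
  | .innT _ _ j => lamN n ^ 2 - j
  | _ => 0

lemma forestParent_of_adj {u v : RV n m E} (hu : ¬ IsHub u) (hv : ¬ IsHub v)
    (h : RAdj n m E u v) :
    forestParent u = v ∧ forestRank v < forestRank u ∨
      forestParent v = u ∧ forestRank u < forestRank v := by
  cases h with
  | pathA i e δ s j hj =>
    simp only [pA_eq] at hv ⊢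
    rcases lt_or_ge (j + 1) (lenA n (E e) δ s) with hj' | hj'
    · exact Or.inr <| parent_pathVertex_succ forestParent forestRank (b := 1) (fun _ => rfl)
        rfl (fun _ => by simp only [forestRank]; omega) hj'
    · rw [pathVertex_of_le j.succ_ne_zero hj'] at hv
      exact absurd (Or.inr (Or.inr (Or.inr ⟨δ, s, rfl⟩))) hv
  | pathB δ s l j hj =>
    simp only [pB_eq] at hu ⊢
    rcases Nat.eq_zero_or_pos j with rfl | hpos
    · exact absurd (Or.inr (Or.inr (Or.inr ⟨δ, s, rfl⟩))) hu
    · exact Or.inl <| parent_pathVertex_pred forestParent forestRank (fun _ => rfl)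
        (fun _ => rfl) rfl hpos.ne' hj
  | pathT δ l j hj =>
    simp only [pT_eq] at hu ⊢
    rcases Nat.eq_zero_or_pos j with rfl | hpos
    · exact absurd (Or.inr (Or.inr (Or.inr ⟨δ, 1, rfl⟩))) hu
    · exact Or.inl <| parent_pathVertex_pred forestParent forestRank (fun _ => rfl)
        (fun _ => rfl) rfl hpos.ne' hj
  | pendA_arc i e δ s =>
    have := lenA_pos (E e) δ s
    refine Or.inr ⟨rfl, ?_⟩
    rw [pA_eq, rank_pathVertex forestRank (b := 1) rfl
      (fun _ => by simp only [forestRank]; omega) (by omega)]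
    simp only [forestRank]
    omega
  | edge_d | w_v | t_v => exact Or.inl ⟨rfl, by simp [forestRank]⟩
  | a_edge | a_c | a_v => exact absurd (Or.inl rfl) hu
  | edge_b => exact absurd (Or.inr (Or.inl rfl)) hv
  | d_c => exact absurd (Or.inr (Or.inr (Or.inl rfl))) hv
  | delta_pend δ s => exact absurd (Or.inr (Or.inr (Or.inr ⟨δ, s, rfl⟩))) hu

theorem isAcyclic_induce_not_isHub :
    ((underlying (RAdj n m E)).induce {v | ¬ IsHub v}).IsAcyclic :=
  isAcyclic_induce_of_parent_rank forestParent forestRank fun _ hu _ hv ⟨_, huv⟩ =>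
    huv.elim (forestParent_of_adj hu hv) fun h => (forestParent_of_adj hv hu h).symm

lemma ncard_setOf_isHub : {v : RV n m E | IsHub v}.ncard = 12 := by
  have hδ : (Set.range fun p : Fin 3 × Fin 3 => (RV.deltaV p.1 p.2 : RV n m E)).ncard = 9 := by
    rw [Set.ncard_range_of_injective fun p q h => by
      obtain ⟨h1, h2⟩ := RV.deltaV.inj h
      exact Prod.ext h1 h2]
    simp
  have hset : {v : RV n m E | IsHub v} =
      insert .a (insert .b (insert .c (Set.range fun p : Fin 3 × Fin 3 => .deltaV p.1 p.2))) := by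
    ext v
    simp [IsHub, eq_comm]
  rw [hset, Set.ncard_insert_of_notMem, Set.ncard_insert_of_notMem, Set.ncard_insert_of_notMem,
    hδ] <;> simp

end Forest

theorem construction_is_dag_and_fvn_le_twelve_general (n m : ℕ)
    (E : Fin m → Fin n × Fin n × Fin n) :
    (∀ v : RV n m E, ¬ Relation.TransGen (RAdj n m E) v v) ∧
    ((underlying (RAdj n m E)).induce
      {v : RV n m E | ¬ (v = .a ∨ v = .b ∨ v = .c ∨
        ∃ δ s : Fin 3, v = .deltaV δ s)}).IsAcyclic ∧
    fvn (underlying (RAdj n m E)) ≤ 12 :=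
  ⟨fun _ h => (topoRank_lt_of_transGen h).false, isAcyclic_induce_not_isHub,
    Nat.sInf_le ⟨_, ncard_setOf_isHub, isAcyclic_induce_not_isHub⟩⟩

/-- The digraph `D` constructed from any 3-Dimensional
Matching instance is a DAG, and deleting the twelve vertices `α_1, α_2, α_3,
β_1, β_2, β_3, γ_1, γ_2, γ_3, a, b, c` from its underlying undirected graph
leaves an acyclic graph; consequently the underlying undirected graph of `D`
has feedback vertex set number at most 12. -/
theorem construction_is_dag_and_fvn_le_twelve (n m : ℕ)
    (E : Fin m → Fin n × Fin n × Fin n) (hE : Function.Injective E) :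
    (∀ v : RV n m E, ¬ Relation.TransGen (RAdj n m E) v v) ∧
    ((underlying (RAdj n m E)).induce
      {v : RV n m E | ¬ (v = .a ∨ v = .b ∨ v = .c ∨
        ∃ δ s : Fin 3, v = .deltaV δ s)}).IsAcyclic ∧
    fvn (underlying (RAdj n m E)) ≤ 12 :=
  construction_is_dag_and_fvn_le_twelve_general n m E

end GeoPaper
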